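/- (Corollary 2) Let [n_1,…,n_s] be a multiset of integers ≥ 2. Then the reciprocal polynomial satisfies χ_{[n_1,…,n_s]}^* = ±χ_{[n_1,…,n_s]}; moreover χ_{[n_1,…,n_s]} is self-reciprocal (χ^* = χ) if and only if gcd(s, n_1,…,n_s) is odd. -/

import Mathlib

open Matrix Polynomial

/-- The Coxeter matrix `Φ_[n]` of the linearly oriented quiver of type `A_{n-1}`:
the `(n-1) × (n-1)` integer matrix whose `(i,j)`-entry is `1` if `j = i + 1`
(for rows other than the last), whose last row has all entries `-1`, and whose
other entries are `0`. -/
def PhiA (n : ℕ) : Matrix (Fin (n - 1)) (Fin (n - 1)) ℤ :=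
  fun i j =>
    if (i : ℕ) = n - 2 then -1
    else if (j : ℕ) = (i : ℕ) + 1 then 1 else 0

/-- The Kronecker (tensor) product `Φ_{[n_1,…,n_s]} = Φ_{[n_1]} ⊗ ⋯ ⊗ Φ_{[n_s]}`,
realized on the index type `Π i, Fin (n i - 1)`. -/
def PhiProd {s : ℕ} (n : Fin s → ℕ) :
    Matrix ((i : Fin s) → Fin (n i - 1)) ((i : Fin s) → Fin (n i - 1)) ℤ :=
  fun x y => ∏ i, PhiA (n i) (x i) (y i)

/-- The characteristic polynomial `χ_{[n_1,…,n_s]} ∈ ℤ[X]` of `Φ_{[n_1,…,n_s]}`. -/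
noncomputable def Chi {s : ℕ} (n : Fin s → ℕ) : Polynomial ℤ :=
  (PhiProd n).charpoly

/-- The standard primitive complex `m`-th root of unity `exp(2π√-1/m)`. -/
noncomputable def zeta (m : ℕ) : ℂ := Complex.exp (2 * Real.pi * Complex.I / m)

/-!
Conjugating `Φ_[n]` by the reversal permutation of `Fin (n - 1)` gives its inverse, and hence the
same holds factorwise for `Φ = Φ_{[n_1,…,n_s]}`. So `Φ⁻¹` and `Φ` have the same characteristic
polynomial, and `χ^*(X) = det (1 - XΦ) = det Φ · det (Φ⁻¹ - X) = (-1)^N · det Φ · χ(X)` with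
`N = ∏ (n_i - 1)` the size of `Φ`. As `det Φ_[n] = (-1)^(n-1)`, the determinant of the Kronecker
product is `(-1)^(sN)`, so `χ^* = (-1)^((s+1)N) χ`, and `(s+1)N` is even exactly when `s` or
some `n_i` is odd.
-/

namespace Matrix

variable {R ι : Type*} [CommRing R] [Fintype ι] [DecidableEq ι]

theorem reverse_charpoly_of_mul_eq_one {A B : Matrix ι ι R} (h : A * B = 1) :
    A.charpoly.reverse = C A.det * (-1) ^ Fintype.card ι * B.charpoly := by
  have hfactor : (1 : Matrix ι ι R[X]) - (X : R[X]) • A.map C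
      = A.map C * -(scalar ι (X : R[X]) - B.map C) := by
    rw [neg_sub, Matrix.mul_sub, ← Matrix.map_mul, h, Matrix.map_one _ (map_zero C) (map_one C),
      scalar_apply, smul_eq_mul_diagonal]
  rw [reverse_charpoly, charpolyRev, hfactor, det_mul, det_neg, ← RingHom.mapMatrix_apply,
    ← RingHom.map_det, mul_assoc]
  rfl

theorem reverse_charpoly_of_mul_submatrix_eq_one {A : Matrix ι ι R} (e : ι ≃ ι)
    (h : A * A.submatrix e e = 1) :
    A.charpoly.reverse = C A.det * (-1) ^ Fintype.card ι * A.charpoly := by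
  rw [reverse_charpoly_of_mul_eq_one h, ← charpoly_reindex e.symm A]
  rfl

end Matrix

namespace Matrix

variable {R ι : Type*} [CommRing R] [Fintype ι] {α β : ι → Type*}

def piKronecker (A : ∀ i, Matrix (α i) (β i) R) : Matrix (∀ i, α i) (∀ i, β i) R :=
  of fun x y => ∏ i, A i (x i) (y i)

@[simp]
theorem piKronecker_apply (A : ∀ i, Matrix (α i) (β i) R) (x : ∀ i, α i) (y : ∀ i, β i) :
    piKronecker A x y = ∏ i, A i (x i) (y i) :=
  rfl

theorem piKronecker_submatrix {γ δ : ι → Type*} (A : ∀ i, Matrix (α i) (β i) R)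
    (e : ∀ i, γ i → α i) (f : ∀ i, δ i → β i) :
    (piKronecker A).submatrix (fun x i => e i (x i)) (fun y i => f i (y i))
      = piKronecker fun i => (A i).submatrix (e i) (f i) :=
  rfl

theorem piKronecker_mul [DecidableEq ι] {γ : ι → Type*} [∀ i, Fintype (β i)]
    (A : ∀ i, Matrix (α i) (β i) R) (B : ∀ i, Matrix (β i) (γ i) R) :
    piKronecker A * piKronecker B = piKronecker fun i => A i * B i := by
  ext x z
  simp only [mul_apply, piKronecker_apply, Finset.prod_univ_sum, Fintype.piFinset_univ,
    Finset.prod_mul_distrib]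

@[simp]
theorem piKronecker_one [∀ i, DecidableEq (α i)] :
    piKronecker (fun i => (1 : Matrix (α i) (α i) R)) = 1 := by
  ext x y
  simp [one_apply, Finset.prod_ite_zero, funext_iff]

variable [DecidableEq ι] [∀ i, Fintype (α i)] [∀ i, DecidableEq (α i)]

theorem det_piKronecker_mulSingle (i : ι) (M : Matrix (α i) (α i) R) :
    (piKronecker (Pi.mulSingle i M)).det
      = M.det ^ ∏ j ∈ Finset.univ.erase i, Fintype.card (α j) := by
  have hblock : (piKronecker (Pi.mulSingle i M)).submatrix (Equiv.piSplitAt i α).symm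
      (Equiv.piSplitAt i α).symm = blockDiagonal fun _ => M := by
    ext ⟨a, f⟩ ⟨b, g⟩
    have hrest (j : {j // j ≠ i}) : (Pi.mulSingle i M : ∀ k, Matrix (α k) (α k) R) j
        ((Equiv.piSplitAt i α).symm (a, f) j) ((Equiv.piSplitAt i α).symm (b, g) j)
          = (1 : Matrix (α j) (α j) R) (f j) (g j) := by
      simp [Equiv.piSplitAt, j.2]
    rw [submatrix_apply, piKronecker_apply, Fintype.prod_eq_mul_prod_subtype_ne _ i,
      Fintype.prod_congr _ _ hrest, ← piKronecker_apply, piKronecker_one]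
    simp [Equiv.piSplitAt, blockDiagonal_apply, one_apply]
  rw [← det_submatrix_equiv_self (Equiv.piSplitAt i α).symm, hblock, det_blockDiagonal,
    Finset.prod_const, Finset.card_univ, Fintype.card_pi,
    Finset.prod_subtype (Finset.univ.erase i) (p := (· ≠ i)) (by simp)]

theorem det_piKronecker (A : ∀ i, Matrix (α i) (α i) R) :
    (piKronecker A).det = ∏ i, (A i).det ^ ∏ j ∈ Finset.univ.erase i, Fintype.card (α j) := by
  suffices ∀ t : Finset ι, (piKronecker (t.piecewise A 1)).det
      = ∏ i ∈ t, (A i).det ^ ∏ j ∈ Finset.univ.erase i, Fintype.card (α j) by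
    simpa using this Finset.univ
  intro t
  induction t using Finset.induction_on with
  | empty => simp [Pi.one_def]
  | insert a t ha ih =>
    have hsplit : (insert a t).piecewise A 1
        = fun j => t.piecewise A 1 j * (Pi.mulSingle a (A a) : ∀ i, Matrix (α i) (α i) R) j := by
      ext1 j
      by_cases hj : j = a
      · subst hj; simp [ha]
      · simp [hj]
    rw [hsplit, ← piKronecker_mul, det_mul, ih, det_piKronecker_mulSingle, Finset.prod_insert ha,
      mul_comm]

end Matrix

theorem Fin.sum_ite_val_eq {M : Type*} [AddCommMonoid M] (m c : ℕ) (a : M) :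
    ∑ k : Fin m, (if (k : ℕ) = c then a else 0) = if c < m then a else 0 := by
  split_ifs with hc
  · simpa [Fin.ext_iff] using Finset.sum_ite_eq' Finset.univ (⟨c, hc⟩ : Fin m) fun _ => a
  · exact Finset.sum_eq_zero fun k _ => if_neg (by omega)

theorem PhiA_mul_submatrix_rev (n : ℕ) : PhiA n * (PhiA n).submatrix Fin.rev Fin.rev = 1 := by
  ext i j
  have hi := i.isLt
  have hj := j.isLt
  by_cases hlast : (i : ℕ) = n - 2
  · have hrow (k : Fin (n - 1)) : PhiA n i k * PhiA n k.rev j.rev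
        = (if (k : ℕ) = 0 then 1 else 0) + (if (k : ℕ) = j + 1 then -1 else 0) := by
      have := k.isLt
      simp only [PhiA, Fin.val_rev]
      split_ifs <;> omega
    simp only [mul_apply, submatrix_apply, hrow, Finset.sum_add_distrib, Fin.sum_ite_val_eq,
      one_apply, Fin.ext_iff]
    split_ifs <;> omega
  · have hrow (k : Fin (n - 1)) : PhiA n i k * PhiA n k.rev j.rev
        = if (k : ℕ) = i + 1 then (if (i : ℕ) = j then 1 else 0) else 0 := by
      have := k.isLt
      simp only [PhiA, Fin.val_rev]
      split_ifs <;> omega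
    simp only [mul_apply, submatrix_apply, hrow, Fin.sum_ite_val_eq, one_apply, Fin.ext_iff]
    split_ifs <;> omega

theorem det_PhiA (n : ℕ) : (PhiA n).det = (-1) ^ (n - 1) := by
  by_cases hn : n - 1 = 0
  · have : IsEmpty (Fin (n - 1)) := by rw [hn]; infer_instance
    rw [det_isEmpty, hn, pow_zero]
  obtain ⟨m, hm⟩ := Nat.exists_eq_add_one_of_ne_zero hn
  rw [← det_submatrix_equiv_self (finCongr hm.symm), det_succ_column_zero,
    Finset.sum_eq_single (Fin.last m)]
  · have hminor : ((PhiA n).submatrix (finCongr hm.symm) (finCongr hm.symm)).submatrix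
        (Fin.last m).succAbove Fin.succ = 1 := by
      ext a b
      have := a.isLt
      simp only [submatrix_apply, Fin.succAbove_last, PhiA, finCongr_apply, Fin.val_cast,
        Fin.val_castSucc, Fin.val_succ, one_apply, Fin.ext_iff]
      split_ifs <;> omega
    have hcorner : (PhiA n) (finCongr hm.symm (Fin.last m)) (finCongr hm.symm 0) = -1 :=
      if_pos (by simp only [finCongr_apply, Fin.val_cast, Fin.val_last]; omega)
    rw [hminor, det_one, submatrix_apply, hcorner, hm, Fin.val_last, pow_succ]
    ring
  · intro k _ hk
    have hk' : (k : ℕ) ≠ m := fun h => hk (Fin.ext (by simp [h]))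
    have : (PhiA n) (finCongr hm.symm k) (finCongr hm.symm 0) = 0 := by
      simp only [PhiA, finCongr_apply, Fin.val_cast]
      rw [if_neg (by omega), if_neg (by simp)]
    rw [submatrix_apply, this, mul_zero, zero_mul]
  · simp

theorem PhiProd_eq_piKronecker {s : ℕ} (n : Fin s → ℕ) :
    PhiProd n = piKronecker fun i => PhiA (n i) :=
  rfl

theorem PhiProd_mul_submatrix_rev {s : ℕ} (n : Fin s → ℕ) :
    PhiProd n * (PhiProd n).submatrix (fun x i => (x i).rev) (fun x i => (x i).rev) = 1 := by
  rw [PhiProd_eq_piKronecker, piKronecker_submatrix, piKronecker_mul]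
  simp only [PhiA_mul_submatrix_rev, piKronecker_one]

theorem det_PhiProd {s : ℕ} (n : Fin s → ℕ) :
    (PhiProd n).det = (-1) ^ (s * ∏ i, (n i - 1)) := by
  have hfactor (i : Fin s) :
      (PhiA (n i)).det ^ ∏ j ∈ Finset.univ.erase i, Fintype.card (Fin (n j - 1))
        = (-1) ^ ∏ j, (n j - 1) := by
    simp only [Fintype.card_fin]
    rw [det_PhiA, ← pow_mul, Finset.mul_prod_erase _ (fun j => n j - 1) (Finset.mem_univ i)]
  rw [PhiProd_eq_piKronecker, det_piKronecker, Fintype.prod_congr _ _ hfactor, Finset.prod_const,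
    Finset.card_univ, Fintype.card_fin, ← pow_mul, mul_comm]

theorem reverse_Chi {s : ℕ} (n : Fin s → ℕ) :
    (Chi n).reverse = (-1) ^ ((s + 1) * ∏ i, (n i - 1)) * Chi n := by
  rw [Chi, reverse_charpoly_of_mul_submatrix_eq_one (Equiv.piCongrRight fun i => Fin.revPerm)
    (PhiProd_mul_submatrix_rev n), det_PhiProd]
  simp [Fintype.card_pi, add_mul, pow_add]

theorem even_succ_mul_prod_pred_iff {s : ℕ} (n : Fin s → ℕ) (hn : ∀ i, 1 ≤ n i) :
    Even ((s + 1) * ∏ i, (n i - 1)) ↔ Odd (Nat.gcd s (Finset.univ.gcd n)) := by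
  have hgcd : 2 ∣ Nat.gcd s (Finset.univ.gcd n) ↔ 2 ∣ s ∧ ∀ i, 2 ∣ n i := by
    simp [Nat.dvd_gcd_iff, Finset.dvd_gcd_iff]
  have hprod : 2 ∣ ∏ i, (n i - 1) ↔ ∃ i, 2 ∣ n i - 1 := by
    simpa using Nat.prime_two.prime.dvd_finsetProd_iff (S := Finset.univ) (fun i => n i - 1)
  have hpred (i : Fin s) : 2 ∣ n i - 1 ↔ ¬2 ∣ n i := by
    have := hn i
    omega
  rw [← Nat.not_even_iff_odd, even_iff_two_dvd, even_iff_two_dvd, hgcd,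
    Nat.prime_two.prime.dvd_mul, hprod]
  have hsucc : 2 ∣ s + 1 ↔ ¬2 ∣ s := by omega
  simp only [hsucc, hpred, not_and_or, not_forall]

theorem chi_reciprocal_general {s : ℕ} (n : Fin s → ℕ) (hn : ∀ i, 2 ≤ n i) :
    ((Chi n).reverse = Chi n ∨ (Chi n).reverse = -(Chi n)) ∧
    ((Chi n).reverse = Chi n ↔ Odd (Nat.gcd s (Finset.univ.gcd n))) := by
  have hne : Chi n ≠ 0 := (charpoly_monic _).ne_zero
  rw [← even_succ_mul_prod_pred_iff n fun i => (hn i).trans' one_le_two, reverse_Chi]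
  rcases Nat.even_or_odd ((s + 1) * ∏ i, (n i - 1)) with he | ho
  · simp [he.neg_one_pow, he]
  · simp [ho.neg_one_pow, Nat.not_even_iff_odd.mpr ho, CharZero.neg_eq_self_iff, hne]

theorem chi_reciprocal {s : ℕ} (hs : 0 < s) (n : Fin s → ℕ) (hn : ∀ i, 2 ≤ n i) :
    ((Chi n).reverse = Chi n ∨ (Chi n).reverse = -(Chi n)) ∧
    ((Chi n).reverse = Chi n ↔ Odd (Nat.gcd s (Finset.univ.gcd n))) :=
  chi_reciprocal_general n hn
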